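/- Let N be a von Neumann algebra with predual N_*. Suppose σ ∈ N_* with ‖σ‖ ≤ 1, r and l are projections in N, and β ∈ (0,1) are such that |σ|(r) ≥ 1−β and |σ*|(l) ≥ 1−β. Then ‖σ − τ‖ < 5√β, where τ = (l·σ·r)/‖l·σ·r‖ and (l·σ·r)(x) = σ(rxl). -/

import Mathlib

open scoped ComplexOrder

/-! Write `x - r x l = (1 - r) x + r x (1 - l)`. By the polar decomposition and Cauchy–Schwarz
for the positive functional `|σ|`, `|σ ((1 - r) x)| = ||σ| ((1 - r) x u)| ≤ |σ|(1 - r) ^ (1/2) ‖x‖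
≤ √β ‖x‖`, and the second term is handled in the same way through `σ*` and `|σ*|`; hence
`‖σ - l·σ·r‖ ≤ 2√β`. As `1 - β ≤ |σ|(r) ≤ ‖σ‖ ≤ 1`, normalising `l·σ·r` moves it by at most
`‖σ - l·σ·r‖ + β`, and `4√β + β < 5√β`. -/

/-- `(l · σ · r) x = σ (r * x * l)`. -/
noncomputable def twoSidedFunctional {N : Type*} [CStarAlgebra N]
    (σ : N →L[ℂ] ℂ) (r l : N) : N →L[ℂ] ℂ :=
  σ.comp ((((ContinuousLinearMap.mul ℂ N).flip l).comp (ContinuousLinearMap.mul ℂ N r)))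

theorem norm_le_one_of_mul_star_mul_eq_self {E : Type*} [NonUnitalNormedRing E] [StarRing E]
    [CStarRing E] {u : E} (hu : u * star u * u = u) : ‖u‖ ≤ 1 := by
  have hproj : IsStarProjection (star u * u) :=
    ⟨by rw [IsIdempotentElem, mul_assoc, ← mul_assoc u, hu], .star_mul_self u⟩
  have := hproj.norm_le
  rw [CStarRing.norm_star_mul_self] at this
  nlinarith [norm_nonneg u]

theorem norm_sub_inv_norm_smul_self_le {E : Type*} [SeminormedAddCommGroup E] [NormedSpace ℝ E]
    (y : E) : ‖y - ‖y‖⁻¹ • y‖ ≤ |‖y‖ - 1| := by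
  rcases eq_or_ne ‖y‖ 0 with hy | hy
  · simp [hy]
  · refine le_of_eq ?_
    calc ‖y - ‖y‖⁻¹ • y‖ = ‖(1 - ‖y‖⁻¹) • y‖ := by rw [sub_smul, one_smul]
    _ = |(1 - ‖y‖⁻¹) * ‖y‖| := by rw [norm_smul, Real.norm_eq_abs, abs_mul, abs_norm]
    _ = |‖y‖ - 1| := by rw [sub_mul, one_mul, inv_mul_cancel₀ hy]

theorem norm_sub_inv_norm_smul_le {E : Type*} [SeminormedAddCommGroup E] [NormedSpace ℝ E]
    (x y : E) : ‖x - ‖y‖⁻¹ • y‖ ≤ 2 * ‖x - y‖ + |‖x‖ - 1| := by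
  have hy : |‖y‖ - 1| ≤ ‖x - y‖ + |‖x‖ - 1| := by
    have h := abs_sub_le ‖y‖ ‖x‖ 1
    rw [abs_sub_comm ‖y‖ ‖x‖] at h
    linarith [abs_norm_sub_norm_le x y]
  linarith [norm_sub_le_norm_sub_add_norm_sub x y (‖y‖⁻¹ • y), norm_sub_inv_norm_smul_self_le y]

namespace ContinuousLinearMap

theorem re_apply_le {E : Type*} [SeminormedAddCommGroup E] [NormedSpace ℂ E]
    (ψ : E →L[ℂ] ℂ) (x : E) : (ψ x).re ≤ ‖ψ‖ * ‖x‖ :=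
  (Complex.re_le_norm _).trans (ψ.le_opNorm x)

variable {A : Type*} [CStarAlgebra A]

theorem norm_apply_star_mul_le (φ : A →L[ℂ] ℂ) (hφ : ∀ x, 0 ≤ φ (star x * x)) (a b : A) :
    ‖φ (star a * b)‖ ≤ √(φ (star a * a)).re * √(φ (star b * b)).re := by
  -- Cauchy–Schwarz in the GNS pre-Hilbert space of `φ`, whose inner product is `φ (star a * b)`.
  let _ := CStarAlgebra.spectralOrder A
  have _ := CStarAlgebra.spectralOrderedRing A
  let f : A →ₚ[ℂ] ℂ := .mk₀ φ fun x hx => by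
    obtain ⟨y, rfl⟩ := CStarAlgebra.nonneg_iff_eq_star_mul_self.mp hx
    exact hφ y
  exact norm_inner_le_norm (𝕜 := ℂ) (f.toPreGNS a) (f.toPreGNS b)

theorem norm_apply_one_sub_mul_le {ψ : A →L[ℂ] ℂ} (hψ : ∀ x, 0 ≤ ψ (star x * x))
    (hψ1 : ‖ψ‖ ≤ 1) {p : A} (hp : IsStarProjection p) {β : ℝ} (hpβ : 1 - β ≤ (ψ p).re)
    (b : A) : ‖ψ ((1 - p) * b)‖ ≤ √β * ‖b‖ := by
  have hq := hp.one_sub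
  have h1 : (ψ (star (1 - p) * (1 - p))).re ≤ β := by
    rw [hq.isSelfAdjoint.star_eq, hq.isIdempotentElem.eq, map_sub, Complex.sub_re]
    have := (ψ.re_apply_le 1).trans
      (mul_le_one₀ hψ1 (norm_nonneg _) (IsStarProjection.norm_le _ (.one A)))
    linarith
  have h2 : (ψ (star b * b)).re ≤ ‖b‖ ^ 2 := by
    have := ψ.re_apply_le (star b * b)
    rw [CStarRing.norm_star_mul_self] at this
    nlinarith [norm_nonneg b]
  calc ‖ψ ((1 - p) * b)‖ = ‖ψ (star (1 - p) * b)‖ := by rw [hq.isSelfAdjoint.star_eq]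
    _ ≤ √(ψ (star (1 - p) * (1 - p))).re * √(ψ (star b * b)).re :=
      ψ.norm_apply_star_mul_le hψ _ _
    _ ≤ √β * ‖b‖ := by
      gcongr
      exact (Real.sqrt_le_left (norm_nonneg b)).mpr h2

theorem norm_apply_one_sub_mul_le_of_polar {σ ψ : A →L[ℂ] ℂ} {u : A}
    (hpolar : ∀ x, σ x = ψ (x * u)) (hu : ‖u‖ ≤ 1) (hψ : ∀ x, 0 ≤ ψ (star x * x))
    (hψ1 : ‖ψ‖ ≤ 1) {p : A} (hp : IsStarProjection p) {β : ℝ} (hpβ : 1 - β ≤ (ψ p).re)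
    (x : A) : ‖σ ((1 - p) * x)‖ ≤ √β * ‖x‖ := by
  rw [hpolar, mul_assoc]
  refine (ψ.norm_apply_one_sub_mul_le hψ hψ1 hp hpβ _).trans ?_
  gcongr
  exact (norm_mul_le x u).trans (mul_le_of_le_one_right (norm_nonneg x) hu)

theorem norm_apply_mul_one_sub_le_of_polar {σ σstar ψ : A →L[ℂ] ℂ} {u : A}
    (hσstar : ∀ x, σstar x = starRingEnd ℂ (σ (star x)))
    (hpolar : ∀ x, σstar x = ψ (x * star u)) (hu : ‖u‖ ≤ 1) (hψ : ∀ x, 0 ≤ ψ (star x * x))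
    (hψ1 : ‖ψ‖ ≤ 1) {r l : A} (hr : IsStarProjection r) (hl : IsStarProjection l) {β : ℝ}
    (hlβ : 1 - β ≤ (ψ l).re) (x : A) : ‖σ (r * x * (1 - l))‖ ≤ √β * ‖x‖ := by
  have hstar : ‖σ (r * x * (1 - l))‖ = ‖σstar ((1 - l) * (star x * r))‖ := by
    rw [hσstar, Complex.norm_conj, star_mul, star_mul, hl.one_sub.isSelfAdjoint.star_eq,
      hr.isSelfAdjoint.star_eq, star_star]
  rw [hstar]
  refine (norm_apply_one_sub_mul_le_of_polar hpolar (by rwa [norm_star]) hψ hψ1 hl hlβ _).trans ?_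
  gcongr
  calc ‖star x * r‖ ≤ ‖star x‖ * ‖r‖ := norm_mul_le _ _
    _ ≤ ‖x‖ := by rw [norm_star]; exact mul_le_of_le_one_right (norm_nonneg x) (hr.norm_le r)

end ContinuousLinearMap

theorem norm_sub_twoSidedFunctional_le {N : Type*} [CStarAlgebra N] {σ : N →L[ℂ] ℂ} {r l : N}
    {c : ℝ} (hc : 0 ≤ c) (hleft : ∀ x, ‖σ ((1 - r) * x)‖ ≤ c * ‖x‖)
    (hright : ∀ x, ‖σ (r * x * (1 - l))‖ ≤ c * ‖x‖) :
    ‖σ - twoSidedFunctional σ r l‖ ≤ 2 * c := by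
  refine ContinuousLinearMap.opNorm_le_bound _ (by positivity) fun x => ?_
  have hsplit : (σ - twoSidedFunctional σ r l) x = σ ((1 - r) * x) + σ (r * x * (1 - l)) := by
    simp only [twoSidedFunctional, sub_apply, ContinuousLinearMap.comp_apply,
      ContinuousLinearMap.flip_apply, ContinuousLinearMap.mul_apply', ← map_sub, ← map_add]
    congr 1
    noncomm_ring
  rw [hsplit]
  linarith [norm_add_le (σ ((1 - r) * x)) (σ (r * x * (1 - l))), hleft x, hright x]

theorem norm_sub_normalized_compression_lt_general
    {N : Type*} [CStarAlgebra N]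
    (σ σstar absσ absσstar : N →L[ℂ] ℂ) (u : N)
    (hσstar : ∀ x, σstar x = starRingEnd ℂ (σ (star x)))
    (hu : u * star u * u = u)
    (habspos : ∀ x : N, 0 ≤ absσ (star x * x)) (habsnorm : ‖absσ‖ = ‖σ‖)
    (hpolar : ∀ x, σ x = absσ (x * u))
    (habsstarpos : ∀ x : N, 0 ≤ absσstar (star x * x)) (habsstarnorm : ‖absσstar‖ = ‖σ‖)
    (hpolarstar : ∀ x, σstar x = absσstar (x * star u))
    (hσ : ‖σ‖ ≤ 1)
    (r l : N) (hr : IsSelfAdjoint r ∧ r * r = r) (hl : IsSelfAdjoint l ∧ l * l = l)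
    (β : ℝ) (hβ : 0 < β ∧ β < 1)
    (hrσ : (1 - β : ℝ) ≤ (absσ r).re) (hlσ : (1 - β : ℝ) ≤ (absσstar l).re) :
    ‖σ - ‖twoSidedFunctional σ r l‖⁻¹ • twoSidedFunctional σ r l‖ <
      5 * Real.sqrt β := by
  have hr' : IsStarProjection r := ⟨hr.2, hr.1⟩
  have hl' : IsStarProjection l := ⟨hl.2, hl.1⟩
  have hu1 := norm_le_one_of_mul_star_mul_eq_self hu
  have hσT : ‖σ - twoSidedFunctional σ r l‖ ≤ 2 * √β :=
    norm_sub_twoSidedFunctional_le (Real.sqrt_nonneg β)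
      (ContinuousLinearMap.norm_apply_one_sub_mul_le_of_polar hpolar hu1 habspos (habsnorm ▸ hσ) hr' hrσ)
      (ContinuousLinearMap.norm_apply_mul_one_sub_le_of_polar hσstar hpolarstar hu1
        habsstarpos (habsstarnorm ▸ hσ) hr' hl' hlσ)
  have hσ1 : |‖σ‖ - 1| ≤ β := by
    have := (absσ.re_apply_le r).trans (mul_le_of_le_one_right (norm_nonneg _) (hr'.norm_le r))
    rw [abs_le]
    constructor <;> linarith
  have hβ_lt : β < √β := Real.lt_sqrt hβ.1.le |>.mpr (by nlinarith)
  linarith [norm_sub_inv_norm_smul_le σ (twoSidedFunctional σ r l)]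

/-- Let `N` be a von Neumann algebra (modelled as a unital C*-algebra in which the
polar decompositions `σ = u |σ|`, `σ* = u* |σ*|` of a normal functional `σ` are
realized by a partial isometry `u ∈ N`).  If `‖σ‖ ≤ 1`, `r, l` are projections with
`|σ|(r) ≥ 1 - β` and `|σ*|(l) ≥ 1 - β`, `0 < β < 1`, then `‖σ - τ‖ < 5√β` where
`τ = l·σ·r / ‖l·σ·r‖`. -/
theorem norm_sub_normalized_compression_lt
    {N : Type*} [CStarAlgebra N]
    (σ σstar absσ absσstar : N →L[ℂ] ℂ) (u : N)
    (hσstar : ∀ x, σstar x = starRingEnd ℂ (σ (star x)))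
    (hu : u * star u * u = u)
    (habspos : ∀ x : N, 0 ≤ absσ (star x * x)) (habsnorm : ‖absσ‖ = ‖σ‖)
    (hpolar : ∀ x, σ x = absσ (x * u)) (habs : ∀ x, absσ x = σ (x * star u))
    (habsstarpos : ∀ x : N, 0 ≤ absσstar (star x * x)) (habsstarnorm : ‖absσstar‖ = ‖σ‖)
    (hpolarstar : ∀ x, σstar x = absσstar (x * star u))
    (habsstar : ∀ x, absσstar x = σstar (x * u))
    (hσ : ‖σ‖ ≤ 1)
    (r l : N) (hr : IsSelfAdjoint r ∧ r * r = r) (hl : IsSelfAdjoint l ∧ l * l = l)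
    (β : ℝ) (hβ : 0 < β ∧ β < 1)
    (hrσ : (1 - β : ℝ) ≤ (absσ r).re) (hlσ : (1 - β : ℝ) ≤ (absσstar l).re) :
    ‖σ - ‖twoSidedFunctional σ r l‖⁻¹ • twoSidedFunctional σ r l‖ <
      5 * Real.sqrt β :=
  norm_sub_normalized_compression_lt_general σ σstar absσ absσstar u hσstar hu habspos habsnorm
    hpolar habsstarpos habsstarnorm hpolarstar hσ r l hr hl β hβ hrσ hlσ
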